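/- arXiv:2202.04545 — 5 statements merged into one kernel-verified Lean document; each statement's English description precedes it below -/
import Mathlib

section
/- If two convex 1-Lipschitz functions g₁, g₂ agree on the ball { y : ‖y − x‖ ≤ 2/μ }, then their Moreau envelopes with parameter μ have the same value and the same gradient at x: S_μ[g₁](x) = S_μ[g₂](x) and ∇S_μ[g₁](x) = ∇S_μ[g₂](x). -/
open Real

lemma aux_lip {n : ℕ} {g : EuclideanSpace ℝ (Fin n) → ℝ} (hlip : LipschitzWith 1 g)
    (u y : EuclideanSpace ℝ (Fin n)) : g u - g y ≤ ‖y - u‖ := by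
  have h := hlip.dist_le_mul u y
  simp only [NNReal.coe_one, one_mul, dist_eq_norm] at h
  calc g u - g y ≤ |g u - g y| := le_abs_self _
    _ ≤ ‖u - y‖ := h
    _ = ‖y - u‖ := norm_sub_rev _ _

lemma aux_quad {μ t : ℝ} (hμ : 0 < μ) : t - 1/μ + μ/2 * (1/μ)^2 ≤ μ/2 * t^2 := by
  have heq : (μ*t - 1)^2 / (2*μ) = μ/2*t^2 - t + 1/μ - μ/2*(1/μ)^2 := by
    field_simp; ring
  have hnn : 0 ≤ (μ*t - 1)^2 / (2*μ) := by positivity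
  linarith

lemma aux_bdd {n : ℕ} (g : EuclideanSpace ℝ (Fin n) → ℝ) (hlip : LipschitzWith 1 g)
    {μ : ℝ} (hμ : 0 < μ) (u : EuclideanSpace ℝ (Fin n)) :
    BddBelow (Set.range fun y => g y + μ / 2 * ‖y - u‖ ^ 2) := by
  refine ⟨g u - 1 / μ + μ/2 * (1/μ)^2, ?_⟩
  rintro _ ⟨y, rfl⟩
  have h1 : g u - g y ≤ ‖y - u‖ := aux_lip hlip u y
  have h2 := aux_quad (t := ‖y - u‖) hμ
  simp only
  linarith

lemma aux_shrink {n : ℕ} (g : EuclideanSpace ℝ (Fin n) → ℝ)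
    (hconv : ConvexOn ℝ Set.univ g) (hlip : LipschitzWith 1 g)
    {μ : ℝ} (hμ : 0 < μ) (u y : EuclideanSpace ℝ (Fin n)) :
    ∃ y', ‖y' - u‖ ≤ 1 / μ ∧ g y' + μ / 2 * ‖y' - u‖ ^ 2 ≤ g y + μ / 2 * ‖y - u‖ ^ 2 := by
  by_cases hcase : ‖y - u‖ ≤ 1 / μ
  · exact ⟨y, hcase, le_rfl⟩
  push_neg at hcase
  set t := ‖y - u‖ with htdef
  have ht0 : 0 < t := lt_trans (by positivity) hcase
  set l := 1 / (μ * t) with hl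
  have hl0 : 0 < l := by positivity
  have hmt : 1 < μ * t := by
    have := (div_lt_iff₀ hμ).mp hcase
    nlinarith
  have hl1 : l < 1 := by rw [hl, div_lt_one (by positivity)]; exact hmt
  have hn : ‖u + l • (y - u) - u‖ = l * t := by
    simp [norm_smul, abs_of_pos hl0]
    exact Or.inl htdef.symm
  have hlt : l * t = 1 / μ := by rw [hl]; field_simp
  refine ⟨u + l • (y - u), ?_, ?_⟩
  · rw [hn, hlt]
  · have hpt : (1 - l) • u + l • y = u + l • (y - u) := by module
    have hconvex := hconv.2 (Set.mem_univ u) (Set.mem_univ y)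
      (by linarith : (0:ℝ) ≤ 1 - l) (le_of_lt hl0) (by ring)
    rw [hpt] at hconvex
    have hconvex' : g (u + l • (y - u)) ≤ (1 - l) * g u + l * g y := by
      simpa [smul_eq_mul] using hconvex
    have hlip' : g u - g y ≤ t := aux_lip hlip u y
    have h2 : (1 - l) * t = t - 1 / μ := by rw [hl]; field_simp
    have hq := aux_quad (t := t) hμ
    have hmul : (1 - l) * (g u - g y) ≤ (1 - l) * t :=
      mul_le_mul_of_nonneg_left hlip' (by linarith)
    rw [hn, hlt]
    calc g (u + l • (y - u)) + μ/2 * (1/μ)^2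
        ≤ (1-l)*g u + l*g y + μ/2*(1/μ)^2 := by linarith
      _ = g y + (1-l)*(g u - g y) + μ/2*(1/μ)^2 := by ring
      _ ≤ g y + (1-l)*t + μ/2*(1/μ)^2 := by linarith
      _ = g y + (t - 1/μ) + μ/2*(1/μ)^2 := by rw [h2]
      _ ≤ g y + μ/2*t^2 := by linarith

lemma aux_le {n : ℕ} (g₁ g₂ : EuclideanSpace ℝ (Fin n) → ℝ)
    (hg₁_lip : LipschitzWith 1 g₁)
    (hg₂_conv : ConvexOn ℝ Set.univ g₂) (hg₂_lip : LipschitzWith 1 g₂)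
    {μ : ℝ} (hμ : 0 < μ) (x : EuclideanSpace ℝ (Fin n))
    (hagree : ∀ y, ‖y - x‖ ≤ 2 / μ → g₁ y = g₂ y)
    (u : EuclideanSpace ℝ (Fin n)) (hu : ‖u - x‖ ≤ 1 / μ) :
    (⨅ y, (g₁ y + μ / 2 * ‖y - u‖ ^ 2)) ≤ ⨅ y, (g₂ y + μ / 2 * ‖y - u‖ ^ 2) := by
  apply le_ciInf
  intro y
  obtain ⟨y', hy', hle⟩ := aux_shrink g₂ hg₂_conv hg₂_lip hμ u y
  have hball : ‖y' - x‖ ≤ 2 / μ := by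
    calc ‖y' - x‖ ≤ ‖y' - u‖ + ‖u - x‖ := by
          simpa using norm_add_le (y' - u) (u - x)
      _ ≤ 1 / μ + 1 / μ := add_le_add hy' hu
      _ = 2 / μ := by ring
  have heq : g₁ y' = g₂ y' := hagree y' hball
  calc (⨅ z, (g₁ z + μ / 2 * ‖z - u‖ ^ 2)) ≤ g₁ y' + μ / 2 * ‖y' - u‖ ^ 2 :=
        ciInf_le (aux_bdd g₁ hg₁_lip hμ u) y'
    _ = g₂ y' + μ / 2 * ‖y' - u‖ ^ 2 := by rw [heq]
    _ ≤ g₂ y + μ / 2 * ‖y - u‖ ^ 2 := hle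

/-- If two convex 1-Lipschitz functions agree on the ball of radius `2/μ` around `x`,
their Moreau envelopes have the same value and gradient at `x`. -/
theorem moreau_envelope_local
    {n : ℕ} (g₁ g₂ : EuclideanSpace ℝ (Fin n) → ℝ)
    (hg₁_conv : ConvexOn ℝ Set.univ g₁) (hg₁_lip : LipschitzWith 1 g₁)
    (hg₂_conv : ConvexOn ℝ Set.univ g₂) (hg₂_lip : LipschitzWith 1 g₂)
    (μ : ℝ) (hμ : 0 < μ)
    (x : EuclideanSpace ℝ (Fin n))
    (hagree : ∀ y, ‖y - x‖ ≤ 2 / μ → g₁ y = g₂ y)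
    (G₁ G₂ : EuclideanSpace ℝ (Fin n) → ℝ)
    (hG₁ : ∀ u, G₁ u = ⨅ y, (g₁ y + μ / 2 * ‖y - u‖ ^ 2))
    (hG₂ : ∀ u, G₂ u = ⨅ y, (g₂ y + μ / 2 * ‖y - u‖ ^ 2))
    (v₁ v₂ : EuclideanSpace ℝ (Fin n))
    (hv₁ : HasGradientAt G₁ v₁ x) (hv₂ : HasGradientAt G₂ v₂ x) :
    G₁ x = G₂ x ∧ v₁ = v₂ := by
  have hagree' : ∀ y, ‖y - x‖ ≤ 2 / μ → g₂ y = g₁ y := fun y hy => (hagree y hy).symm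
  have heqball : ∀ u, ‖u - x‖ ≤ 1 / μ → G₁ u = G₂ u := by
    intro u hu
    rw [hG₁, hG₂]
    exact le_antisymm (aux_le g₁ g₂ hg₁_lip hg₂_conv hg₂_lip hμ x hagree u hu)
      (aux_le g₂ g₁ hg₂_lip hg₁_conv hg₁_lip hμ x hagree' u hu)
  have hx : G₁ x = G₂ x := heqball x (by simp; positivity)
  refine ⟨hx, ?_⟩
  have hev : G₁ =ᶠ[nhds x] G₂ := by
    have hmem : Metric.closedBall x (1 / μ) ∈ nhds x :=
      Metric.closedBall_mem_nhds x (by positivity)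
    filter_upwards [hmem] with u hu
    exact heqball u (by rwa [Metric.mem_closedBall, dist_eq_norm] at hu)
  have hv₁' : HasGradientAt G₂ v₁ x := by
    rw [hasGradientAt_iff_hasFDerivAt] at hv₁ ⊢
    exact hv₁.congr_of_eventuallyEq hev.symm
  exact hv₁'.unique hv₂
end

section
/- For p > 1, σ > 0, β > 0 and orthonormal vectors e₁, …, e_T in ℝⁿ with signs ξ₁, …, ξ_T ∈ {−1, 1}, the minimum over x ∈ ℝⁿ of H(x) = β·max_{1≤k≤T} ξ_k⟨e_k, x⟩ + (σ/p)‖x‖^p equals −((p−1)/p)·(β^p / (σ T^{p/2}))^{1/(p−1)}, where ‖·‖ is the Euclidean norm. -/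
open Real RealInnerProductSpace

private lemma aux_young {p σ a : ℝ} (hp : 1 < p) (hσ : 0 < σ) (ha : 0 < a)
    {s : ℝ} (hs : 0 ≤ s) :
    -((p - 1) / p * ((a ^ p / σ) ^ (1 / (p - 1)))) ≤ σ / p * s ^ p - a * s := by
  have hp0 : (0:ℝ) < p := lt_trans one_pos hp
  have hp1 : (0:ℝ) < p - 1 := sub_pos.2 hp
  have hq : p.HolderConjugate (p / (p - 1)) := Real.HolderConjugate.conjExponent hp
  have hσp : (0:ℝ) < σ ^ (1/p) := Real.rpow_pos_of_pos hσ _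
  have key := Real.young_inequality_of_nonneg
    (mul_nonneg hσp.le hs) (le_of_lt (div_pos ha hσp)) hq
  have h1 : (σ ^ (1/p) * s) * (a / σ ^ (1/p)) = a * s := by
    field_simp
  have h2 : (σ ^ (1/p) * s) ^ p = σ * s ^ p := by
    rw [Real.mul_rpow hσp.le hs, ← Real.rpow_mul hσ.le,
      one_div_mul_cancel hp0.ne', Real.rpow_one]
  have h3 : (a / σ ^ (1/p)) ^ (p / (p - 1)) = (a ^ p / σ) ^ (1 / (p - 1)) := by
    have hpe : p / (p - 1) = p * (1 / (p - 1)) := by ring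
    rw [hpe, Real.rpow_mul (le_of_lt (div_pos ha hσp)),
      Real.div_rpow ha.le hσp.le, ← Real.rpow_mul hσ.le,
      one_div_mul_cancel hp0.ne', Real.rpow_one]
  rw [h1, h2, h3] at key
  have h4 : (a ^ p / σ) ^ (1 / (p - 1)) / (p / (p - 1))
      = (p - 1) / p * ((a ^ p / σ) ^ (1 / (p - 1))) := by
    rw [div_div_eq_mul_div]
    ring
  rw [h4] at key
  have h5 : σ * s ^ p / p = σ / p * s ^ p := by ring
  rw [h5] at key
  linarith

private lemma aux_eq {p σ a : ℝ} (hp : 1 < p) (hσ : 0 < σ) (ha : 0 < a) :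
    σ / p * ((a / σ) ^ (1 / (p - 1))) ^ p - a * ((a / σ) ^ (1 / (p - 1)))
      = -((p - 1) / p * ((a ^ p / σ) ^ (1 / (p - 1)))) := by
  have hp0 : (0:ℝ) < p := lt_trans one_pos hp
  have hp1 : (0:ℝ) < p - 1 := sub_pos.2 hp
  have haσ : (0:ℝ) < a / σ := div_pos ha hσ
  set t : ℝ := (a / σ) ^ (1 / (p - 1)) with ht_def
  have htp : t ^ p = (a / σ) * t := by
    rw [ht_def, ← Real.rpow_mul haσ.le]
    have hh : 1 / (p - 1) * p = 1 + 1 / (p - 1) := by field_simp; ring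
    rw [hh, Real.rpow_add haσ, Real.rpow_one]
  have hat : a * t = (a ^ p / σ) ^ (1 / (p - 1)) := by
    have ha1 : a = (a ^ (p - 1)) ^ (1 / (p - 1)) := by
      rw [← Real.rpow_mul ha.le, mul_one_div, div_self hp1.ne', Real.rpow_one]
    calc a * t = (a ^ (p-1)) ^ (1/(p-1)) * (a/σ) ^ (1/(p-1)) := by rw [← ha1]
      _ = (a ^ (p-1) * (a/σ)) ^ (1/(p-1)) := by
          rw [← Real.mul_rpow (Real.rpow_nonneg ha.le _) haσ.le]
      _ = (a ^ p / σ) ^ (1/(p-1)) := by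
          congr 1
          rw [mul_div_assoc', ← Real.rpow_add_one ha.ne' (p-1), sub_add_cancel]
  rw [htp]
  have hσ' := hσ.ne'
  have hp' := hp0.ne'
  have hmid : σ / p * ((a/σ) * t) = a * t / p := by
    field_simp
  rw [hmid, hat]
  field_simp
  ring

/-- The minimum of `β max_k ξ_k ⟨e_k, x⟩ + (σ/p)‖x‖^p` over `ℝⁿ`, for an
orthonormal family `e₁,…,e_T` and signs `ξ_k ∈ {−1,1}`. -/
theorem min_max_linear_plus_power_regularizer
    {n T : ℕ} (hT : 0 < T) (hTn : T ≤ n)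
    (p σ β : ℝ) (hp : 1 < p) (hσ : 0 < σ) (hβ : 0 < β)
    (e : Fin T → EuclideanSpace ℝ (Fin n)) (he : Orthonormal ℝ e)
    (ξ : Fin T → ℝ) (hξ : ∀ k, ξ k = 1 ∨ ξ k = -1) :
    haveI : Nonempty (Fin T) := Fin.pos_iff_nonempty.mp hT
    IsLeast (Set.range fun x : EuclideanSpace ℝ (Fin n) =>
        β * (⨆ k : Fin T, ξ k * ⟪e k, x⟫) + σ / p * ‖x‖ ^ p)
      (-((p - 1) / p * (β ^ p / (σ * (T : ℝ) ^ (p / 2))) ^ (1 / (p - 1)))) := by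
  haveI : Nonempty (Fin T) := Fin.pos_iff_nonempty.mp hT
  have hp0 : (0:ℝ) < p := lt_trans one_pos hp
  have hp1 : (0:ℝ) < p - 1 := sub_pos.2 hp
  have hT0 : (0:ℝ) < (T:ℝ) := Nat.cast_pos.mpr hT
  have hsT : (0:ℝ) < Real.sqrt T := Real.sqrt_pos.2 hT0
  set a : ℝ := β / Real.sqrt T with ha_def
  have ha : 0 < a := div_pos hβ hsT
  have hap : a ^ p = β ^ p / (T:ℝ) ^ (p/2) := by
    rw [ha_def, Real.div_rpow hβ.le (Real.sqrt_nonneg _)]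
    congr 1
    rw [Real.sqrt_eq_rpow, ← Real.rpow_mul hT0.le]
    congr 1
    ring
  have hconst : (β ^ p / (σ * (T:ℝ) ^ (p/2))) ^ (1/(p-1)) = (a ^ p / σ) ^ (1/(p-1)) := by
    rw [hap, div_div, mul_comm]
  have hξ2 : ∀ k, ξ k * ξ k = 1 := by
    intro k; rcases hξ k with h | h <;> rw [h] <;> norm_num
  set v : EuclideanSpace ℝ (Fin n) := ∑ k, ξ k • e k with hv_def
  have hinner : ∀ k, ⟪e k, v⟫ = ξ k := fun k => he.inner_right_fintype ξ k
  have hvv : ⟪v, v⟫ = (T:ℝ) := by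
    nth_rewrite 1 [hv_def]
    rw [sum_inner]
    simp only [real_inner_smul_left, hinner, hξ2]
    simp
  have hnv : ‖v‖ = Real.sqrt T := by
    rw [norm_eq_sqrt_real_inner, hvv]
  set C : ℝ := (p - 1) / p * ((a ^ p / σ) ^ (1 / (p - 1))) with hC_def
  have hgoal_eq : -((p - 1) / p * (β ^ p / (σ * (T : ℝ) ^ (p / 2))) ^ (1 / (p - 1))) = -C := by
    rw [hC_def, hconst]
  rw [hgoal_eq]
  set t : ℝ := (a / σ) ^ (1 / (p - 1)) with ht_def
  have ht0 : 0 ≤ t := Real.rpow_nonneg (div_pos ha hσ).le _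
  constructor
  · -- membership : the minimizer
    refine ⟨(-(t / Real.sqrt T)) • v, ?_⟩
    show β * (⨆ k, ξ k * ⟪e k, (-(t / Real.sqrt T)) • v⟫)
        + σ / p * ‖(-(t / Real.sqrt T)) • v‖ ^ p = -C
    have hin : ∀ k, ξ k * ⟪e k, (-(t / Real.sqrt T)) • v⟫ = -(t / Real.sqrt T) := by
      intro k
      rw [real_inner_smul_right, hinner]
      have h : ξ k * (-(t / Real.sqrt T) * ξ k)
          = -(t / Real.sqrt T) * (ξ k * ξ k) := by ring
      rw [h, hξ2, mul_one]
    have hsup : (⨆ k, ξ k * ⟪e k, (-(t / Real.sqrt T)) • v⟫) = -(t / Real.sqrt T) := by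
      simp only [hin]
      exact ciSup_const
    have hnx : ‖(-(t / Real.sqrt T)) • v‖ = t := by
      rw [norm_smul, hnv, Real.norm_eq_abs, abs_neg,
        abs_of_nonneg (div_nonneg ht0 hsT.le), div_mul_cancel₀ _ hsT.ne']
    rw [hsup, hnx]
    have hb : β * -(t / Real.sqrt T) = -(a * t) := by rw [ha_def]; ring
    rw [hb]
    have heq := aux_eq hp hσ ha
    rw [← ht_def, ← hC_def] at heq
    linarith
  · -- lower bound
    rintro y ⟨x, rfl⟩
    show -C ≤ β * (⨆ k, ξ k * ⟪e k, x⟫) + σ / p * ‖x‖ ^ p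
    have hsum : ∑ k, ξ k * ⟪e k, x⟫ = ⟪v, x⟫ := by
      rw [hv_def, sum_inner]
      simp only [real_inner_smul_left]
    have hCS : -(Real.sqrt T * ‖x‖) ≤ ⟪v, x⟫ := by
      have h1 := abs_real_inner_le_norm v x
      rw [hnv] at h1
      have h2 := neg_abs_le (⟪v, x⟫)
      linarith
    have hTc : (T:ℝ) * (‖x‖ / Real.sqrt T) = Real.sqrt T * ‖x‖ := by
      have hss := Real.mul_self_sqrt hT0.le
      field_simp
      linear_combination (-‖x‖) * (Real.sq_sqrt hT0.le)
    have hex : ∃ k, -(‖x‖ / Real.sqrt T) ≤ ξ k * ⟪e k, x⟫ := by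
      by_contra hcon
      push_neg at hcon
      have hlt : ∑ k, ξ k * ⟪e k, x⟫ < ∑ _k : Fin T, -(‖x‖ / Real.sqrt T) :=
        Finset.sum_lt_sum_of_nonempty Finset.univ_nonempty (fun k _ => hcon k)
      rw [Finset.sum_const, Finset.card_univ, Fintype.card_fin, nsmul_eq_mul,
        hsum, mul_neg, hTc] at hlt
      linarith
    obtain ⟨k, hk⟩ := hex
    have hsup : ξ k * ⟪e k, x⟫ ≤ ⨆ j, ξ j * ⟪e j, x⟫ :=
      le_ciSup (f := fun j => ξ j * ⟪e j, x⟫) (Set.Finite.bddAbove (Set.finite_range _)) k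
    have hbs : -(a * ‖x‖) ≤ β * (⨆ j, ξ j * ⟪e j, x⟫) := by
      have h1 : -(‖x‖ / Real.sqrt T) ≤ ⨆ j, ξ j * ⟪e j, x⟫ := le_trans hk hsup
      have h2 := mul_le_mul_of_nonneg_left h1 hβ.le
      have h3 : β * -(‖x‖ / Real.sqrt T) = -(a * ‖x‖) := by rw [ha_def]; ring
      linarith
    have hy := aux_young hp hσ ha (norm_nonneg x)
    rw [← hC_def] at hy
    linarith
end

section
/- Let F(x) = f(x) + (σ/p)‖x‖^p with f convex differentiable and p ≥ 2, σ > 0, and let x* be the minimizer of F. Then (1/2)^{p−2} (σ/p) ‖x − x*‖^p ≤ F(x) − F(x*) for all x ∈ ℝⁿ; in particular (1/2)^{p−2}(σ/p)‖x*‖^p ≤ F(0) − F(x*). -/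
open Real

open Set RealInnerProductSpace

section AuxLemmas


lemma my_rpow_superadd {q a b : ℝ} (hq : 1 ≤ q) (ha : 0 ≤ a) (hb : 0 ≤ b) :
    a ^ q + b ^ q ≤ (a + b) ^ q := by
  have h := NNReal.add_rpow_le_rpow_add a.toNNReal b.toNNReal hq
  have := NNReal.coe_le_coe.mpr h
  push_cast [NNReal.coe_rpow, Real.coe_toNNReal _ ha, Real.coe_toNNReal _ hb] at this
  simpa using this

lemma my_two_le_one (p : ℝ) (hp : 2 ≤ p) : (2:ℝ) ^ (2 - p) ≤ 1 := by
  have : (2:ℝ) ^ (2 - p) ≤ (2:ℝ) ^ (0:ℝ) :=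
    Real.rpow_le_rpow_of_exponent_le one_le_two (by linarith)
  simpa using this

lemma my_sq_rpow {a : ℝ} (ha : 0 ≤ a) (r : ℝ) : (a ^ 2) ^ (r / 2) = a ^ r := by
  rw [← Real.rpow_natCast a 2, ← Real.rpow_mul ha]
  congr 1; ring

lemma my_powmean {q u v : ℝ} (hq : 1 ≤ q) (hu : 0 ≤ u) (hv : 0 ≤ v) :
    (2:ℝ) ^ (1 - q) * (u + v) ^ q ≤ u ^ q + v ^ q := by
  have hc := (convexOn_rpow hq).2 (mem_Ici.mpr hu) (mem_Ici.mpr hv)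
    (by norm_num : (0:ℝ) ≤ 1/2) (by norm_num : (0:ℝ) ≤ 1/2) (by norm_num)
  simp only [smul_eq_mul] at hc
  have h1 : ((u + v)/2) ^ q ≤ 1/2 * u^q + 1/2 * v^q := by
    have e : (1:ℝ)/2*u + 1/2*v = (u+v)/2 := by ring
    rwa [e] at hc
  have h2 : ((u+v)/2) ^ q = (u+v)^q * (2:ℝ)^(-q) := by
    rw [div_eq_mul_inv, Real.mul_rpow (by linarith) (by norm_num),
      Real.inv_rpow (by norm_num), ← Real.rpow_neg (by norm_num)]
  rw [h2] at h1
  have key : (2:ℝ)^(1-q) * (u+v)^q = 2 * ((u+v)^q * (2:ℝ)^(-q)) := by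
    rw [show (1-q) = 1 + (-q) by ring, Real.rpow_add (by norm_num : (0:ℝ) < 2), Real.rpow_one]
    ring
  rw [key]
  linarith

lemma my_hasDerivAt (p : ℝ) (hp : 2 ≤ p) (x : ℝ) :
    HasDerivAt (fun t : ℝ => (t^2) ^ (p/2)) (p * (x^2) ^ (p/2 - 1) * x) x := by
  have hs : HasDerivAt (fun t : ℝ => t^2) (2*x) x := by
    simpa using (hasDerivAt_pow 2 x)
  have := hs.rpow_const (p := p/2) (Or.inr (by linarith))
  convert this using 1
  ring

lemma scalar_key {p : ℝ} (hp : 2 ≤ p) {y : ℝ} (hy : 0 ≤ y) (x : ℝ) :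
    y^p + p*y^(p-1)*(x-y) + 2^(2-p)*((x-y)^2)^(p/2) ≤ (x^2)^(p/2) := by
  set c : ℝ := (2:ℝ)^(2-p) with hc
  have hc0 : 0 < c := Real.rpow_pos_of_pos (by norm_num) _
  have hc1 : c ≤ 1 := my_two_le_one p hp
  set h : ℝ → ℝ := fun t => (t^2)^(p/2) - y^p - p*y^(p-1)*(t-y) - c*((t-y)^2)^(p/2) with hh
  have hderiv : ∀ t : ℝ, HasDerivAt h
      (p * (t^2) ^ (p/2 - 1) * t - p*y^(p-1) - c * (p * ((t-y)^2) ^ (p/2 - 1) * (t-y))) t := by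
    intro t
    have h1 := my_hasDerivAt p hp t
    have h2 : HasDerivAt (fun s : ℝ => ((s-y)^2)^(p/2)) (p * ((t-y)^2) ^ (p/2-1) * (t-y)) t := by
      have hs : HasDerivAt (fun s : ℝ => s - y) 1 t := (hasDerivAt_id t).sub_const y
      have := (my_hasDerivAt p hp (t-y)).comp t hs
      rw [mul_one] at this
      exact this
    have h3 : HasDerivAt (fun s : ℝ => p*y^(p-1)*(s-y)) (p*y^(p-1)) t := by
      simpa using (((hasDerivAt_id t).sub_const y).const_mul (p*y^(p-1)))
    exact ((h1.sub_const (y^p)).sub h3).sub (h2.const_mul c)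
  have hdiff : Differentiable ℝ h := fun t => (hderiv t).differentiableAt
  have hy0 : h y = 0 := by
    simp only [hh]
    rw [my_sq_rpow hy p]
    have e : ((y - y)^2 : ℝ) = 0 := by ring
    rw [e, Real.zero_rpow (by positivity : p/2 ≠ 0)]
    ring
  have hexp : p/2 - 1 = (p-2)/2 := by ring
  have hq1 : 1 ≤ p - 1 := by linarith
  have main : 0 ≤ h x := by
    rcases le_or_gt y x with hxy | hxy
    · have mono : MonotoneOn h (Ici y) := by
        apply monotoneOn_of_deriv_nonneg (convex_Ici y) hdiff.continuous.continuousOn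
          (fun t _ => (hdiff t).differentiableWithinAt)
        intro t ht
        rw [interior_Ici] at ht
        rw [(hderiv t).deriv]
        have hty : y < t := ht
        have ht0 : 0 < t := lt_of_le_of_lt hy hty
        have e1 : (t^2)^(p/2-1) * t = t^(p-1) := by
          rw [hexp, my_sq_rpow ht0.le, ← Real.rpow_add_one ht0.ne']
          congr 1; ring
        have e2 : ((t-y)^2)^(p/2-1) * (t-y) = (t-y)^(p-1) := by
          rw [hexp, my_sq_rpow (by linarith : (0:ℝ) ≤ t - y),
            ← Real.rpow_add_one (by linarith : t - y ≠ 0)]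
          congr 1; ring
        have hsup : y^(p-1) + (t-y)^(p-1) ≤ t^(p-1) := by
          have := my_rpow_superadd hq1 hy (by linarith : (0:ℝ) ≤ t - y)
          simpa [show y + (t - y) = t by ring] using this
        have hnn : 0 ≤ (t-y)^(p-1) := Real.rpow_nonneg (by linarith) _
        have hcb : c * (t-y)^(p-1) ≤ (t-y)^(p-1) := by nlinarith
        have hp0 : 0 < p := by linarith
        have key : p * (t^2)^(p/2-1) * t - p*y^(p-1) - c*(p * ((t-y)^2)^(p/2-1) * (t-y))
            = p * (t^(p-1) - y^(p-1) - c*(t-y)^(p-1)) := by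
          linear_combination (p : ℝ) * e1 - c * p * e2
        rw [key]
        nlinarith
      have := mono (mem_Ici.mpr le_rfl) (mem_Ici.mpr hxy) hxy
      rwa [hy0] at this
    · have anti : AntitoneOn h (Iic y) := by
        apply antitoneOn_of_deriv_nonpos (convex_Iic y) hdiff.continuous.continuousOn
          (fun t _ => (hdiff t).differentiableWithinAt)
        intro t ht
        rw [interior_Iic] at ht
        rw [(hderiv t).deriv]
        have hty : t < y := ht
        have e2 : ((t-y)^2)^(p/2-1) * (t-y) = -((y-t)^(p-1)) := by
          have e : ((t-y)^2 : ℝ) = (y-t)^2 := by ring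
          rw [hexp, e, my_sq_rpow (by linarith : (0:ℝ) ≤ y - t)]
          have e' : (y-t)^(p-2) * (y-t) = (y-t)^(p-1) := by
            rw [← Real.rpow_add_one (by linarith : y - t ≠ 0)]
            congr 1; ring
          nlinarith [e']
        have hp0 : 0 < p := by linarith
        rcases le_or_gt 0 t with ht0 | ht0
        · have e1 : (t^2)^(p/2-1) * t = t^(p-1) := by
            rcases eq_or_lt_of_le ht0 with h0 | h0
            · rw [← h0]
              simp [Real.zero_rpow (show p - 1 ≠ 0 by linarith)]
            · rw [hexp, my_sq_rpow h0.le, ← Real.rpow_add_one h0.ne']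
              congr 1; ring
          have hsup : t^(p-1) + (y-t)^(p-1) ≤ y^(p-1) := by
            have := my_rpow_superadd hq1 ht0 (by linarith : (0:ℝ) ≤ y - t)
            simpa [show t + (y - t) = y by ring] using this
          have hnn : 0 ≤ (y-t)^(p-1) := Real.rpow_nonneg (by linarith) _
          have hcb : c * (y-t)^(p-1) ≤ (y-t)^(p-1) := by nlinarith
          have key : p * (t^2)^(p/2-1) * t - p*y^(p-1) - c*(p * ((t-y)^2)^(p/2-1) * (t-y))
              = p * (t^(p-1) - y^(p-1) + c*(y-t)^(p-1)) := by
            linear_combination (p : ℝ) * e1 - c * p * e2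
          rw [key]
          nlinarith
        · have e1 : (t^2)^(p/2-1) * t = -((-t)^(p-1)) := by
            have e : (t^2 : ℝ) = (-t)^2 := by ring
            rw [hexp, e, my_sq_rpow (by linarith : (0:ℝ) ≤ -t)]
            have e' : (-t)^(p-2) * (-t) = (-t)^(p-1) := by
              rw [← Real.rpow_add_one (by linarith : -t ≠ 0)]
              congr 1; ring
            nlinarith [e']
          have hpm : (2:ℝ)^(1-(p-1)) * ((-t) + y)^(p-1) ≤ (-t)^(p-1) + y^(p-1) :=
            my_powmean hq1 (by linarith) hy
          have hc2 : c = (2:ℝ)^(1-(p-1)) := by rw [hc]; congr 1; ring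
          have hyt : ((y - t) : ℝ) = (-t) + y := by ring
          have key : p * (t^2)^(p/2-1) * t - p*y^(p-1) - c*(p * ((t-y)^2)^(p/2-1) * (t-y))
              = p * (c*(y-t)^(p-1) - (-t)^(p-1) - y^(p-1)) := by
            linear_combination (p : ℝ) * e1 - c * p * e2
          rw [key, hyt, hc2]
          nlinarith
      have := anti (mem_Iic.mpr hxy.le) (mem_Iic.mpr le_rfl) hxy.le
      rwa [hy0] at this
  simp only [hh] at main
  linarith

lemma vector_key {E : Type*} [NormedAddCommGroup E] [InnerProductSpace ℝ E]
    {p : ℝ} (hp : 2 ≤ p) (a b : E) :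
    ‖b‖^p + p * ‖b‖^(p-2) * ⟪b, a - b⟫ + 2^(2-p) * ‖a-b‖^p ≤ ‖a‖^p := by
  have hc1 : (2:ℝ)^(2-p) ≤ 1 := my_two_le_one p hp
  have hc0 : (0:ℝ) < 2^(2-p) := Real.rpow_pos_of_pos (by norm_num) _
  by_cases hb : b = 0
  · subst hb
    simp only [inner_zero_left, norm_zero, mul_zero, sub_zero, add_zero]
    rw [Real.zero_rpow (by linarith : p ≠ 0)]
    have hA : (0:ℝ) ≤ ‖a‖^p := Real.rpow_nonneg (norm_nonneg a) _
    nlinarith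
  · have hB : (0:ℝ) < ‖b‖ := norm_pos_iff.mpr hb
    set B := ‖b‖ with hBdef
    have eB1 : B^(p-1) = B^(p-2) * B := by
      rw [← Real.rpow_add_one hB.ne']; congr 1; ring
    have eBp : B^p = B^(p-2) * B * B := by
      rw [← eB1, ← Real.rpow_add_one hB.ne']; congr 1; ring
    by_cases ha : a = 0
    · subst ha
      have : ⟪b, (0:E) - b⟫ = -(B*B) := by
        simp [real_inner_self_eq_norm_mul_norm, hBdef, sq]
      rw [this]
      simp only [norm_zero, zero_sub, norm_neg]
      rw [Real.zero_rpow (by linarith : p ≠ 0)]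
      have hBp : (0:ℝ) < B^p := Real.rpow_pos_of_pos hB _
      have h1 : 2^(2-p) * B^p ≤ B^p := by nlinarith
      have h2 : p * B^(p-2) * -(B*B) = -(p * B^p) := by rw [eBp]; ring
      rw [h2]
      nlinarith
    · have hA : (0:ℝ) < ‖a‖ := norm_pos_iff.mpr ha
      set A := ‖a‖ with hAdef
      set c := ⟪b, a⟫ with hcdef
      have hcs : |c| ≤ B * A := abs_real_inner_le_norm b a
      have hcs1 : -(A*B) ≤ c := by cases abs_le.mp hcs; nlinarith
      have hcs2 : c ≤ A*B := by cases abs_le.mp hcs; nlinarith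
      have hinner : ⟪b, a - b⟫ = c - B*B := by
        rw [inner_sub_right, real_inner_self_eq_norm_mul_norm]
      have hnormsub : ‖a - b‖^2 = A^2 + B^2 - 2*c := by
        rw [norm_sub_sq_real, real_inner_comm]; ring
      have hsubp : ‖a-b‖^p = (A^2 + B^2 - 2*c)^(p/2) := by
        rw [← my_sq_rpow (norm_nonneg (a-b)) p, hnormsub]
      set θ := (A*B - c)/(2*A*B) with hθdef
      have hAB : (0:ℝ) < 2*A*B := by positivity
      have hθ0 : 0 ≤ θ := by
        apply div_nonneg _ hAB.le; nlinarith
      have hθ1' : 1 - θ = (A*B + c)/(2*A*B) := by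
        rw [hθdef]; field_simp; ring
      have hθ1 : 0 ≤ 1 - θ := by
        rw [hθ1']; apply div_nonneg _ hAB.le; nlinarith
      -- convexity of u ^ (p/2) on Ici 0
      have hconv := (convexOn_rpow (by linarith : (1:ℝ) ≤ p/2)).2
        (mem_Ici.mpr (sq_nonneg (A+B))) (mem_Ici.mpr (sq_nonneg (A-B))) hθ0 hθ1 (by ring)
      simp only [smul_eq_mul] at hconv
      have hmix : θ * (A+B)^2 + (1-θ) * (A-B)^2 = A^2 + B^2 - 2*c := by
        rw [hθdef, hθ1']; field_simp; ring
      rw [hmix] at hconv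
      -- scalar endpoints
      have s1 := scalar_key hp hB.le A
      have s2 := scalar_key hp hB.le (-A)
      rw [my_sq_rpow hA.le] at s1
      have e1 : (((-A) - B)^2 : ℝ) = (A+B)^2 := by ring
      have e2 : (((-A))^2 : ℝ) = A^2 := by ring
      rw [e1, e2, my_sq_rpow hA.le] at s2
      -- combine
      set P1 : ℝ := ((A+B)^2)^(p/2) with hP1
      set P2 : ℝ := ((A-B)^2)^(p/2) with hP2
      have comb : θ * (B^p + p*B^(p-1)*((-A)-B) + 2^(2-p)*P1)
          + (1-θ) * (B^p + p*B^(p-1)*(A-B) + 2^(2-p)*P2) ≤ A^p := by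
        have h2' := mul_le_mul_of_nonneg_left s2 hθ0
        have h1' := mul_le_mul_of_nonneg_left s1 hθ1
        have hsum : θ*A^p + (1-θ)*A^p = A^p := by ring
        linarith
      have hkey : B^p + p * B^(p-2) * (c - B*B) + 2^(2-p)*(θ*P1 + (1-θ)*P2)
          = θ * (B^p + p*B^(p-1)*((-A)-B) + 2^(2-p)*P1)
          + (1-θ) * (B^p + p*B^(p-1)*(A-B) + 2^(2-p)*P2) := by
        rw [hθdef, eB1, eBp]
        field_simp
        ring
      rw [hinner, hsubp]
      have hconv' : 2^(2-p) * (A^2+B^2-2*c)^(p/2) ≤ 2^(2-p) * (θ*P1 + (1-θ)*P2) :=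
        mul_le_mul_of_nonneg_left hconv hc0.le
      calc B^p + p * B^(p-2) * (c - B*B) + 2^(2-p) * (A^2+B^2-2*c)^(p/2)
          ≤ B^p + p * B^(p-2) * (c - B*B) + 2^(2-p)*(θ*P1 + (1-θ)*P2) := by linarith
        _ = _ := hkey
        _ ≤ A^p := comb

variable {E : Type*} [NormedAddCommGroup E] [InnerProductSpace ℝ E] [CompleteSpace E]

lemma grad_reg {p : ℝ} (hp : 2 ≤ p) (σ : ℝ) (x : E) :
    HasGradientAt (fun y : E => σ/p * ‖y‖^p) ((σ * ‖x‖^(p-2)) • x) x := by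
  have hp0 : (0:ℝ) < p := by linarith
  have hin : HasFDerivAt (fun y : E => ⟪y,y⟫)
      ((fderivInnerCLM ℝ (x, x)).comp ((ContinuousLinearMap.id ℝ E).prod
        (ContinuousLinearMap.id ℝ E))) x :=
    (hasFDerivAt_id x).inner ℝ (hasFDerivAt_id x)
  have hrp := (hin.rpow_const (p := p/2) (Or.inr (by linarith))).const_mul (σ/p)
  have hfun : (fun y : E => σ/p * ⟪y,y⟫ ^ (p/2)) = (fun y : E => σ/p * ‖y‖^p) := by
    funext y
    rw [real_inner_self_eq_norm_sq, my_sq_rpow (norm_nonneg y) p]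
  rw [hfun] at hrp
  rw [hasGradientAt_iff_hasFDerivAt]
  have hcoef : (⟪x,x⟫ : ℝ) ^ (p/2 - 1) = ‖x‖^(p-2) := by
    rw [real_inner_self_eq_norm_sq, show p/2 - 1 = (p-2)/2 by ring,
      my_sq_rpow (norm_nonneg x)]
  have heq : ((σ/p) • ((p/2 * ⟪x,x⟫ ^ (p/2 - 1)) •
      ((fderivInnerCLM ℝ (x, x)).comp ((ContinuousLinearMap.id ℝ E).prod
        (ContinuousLinearMap.id ℝ E)))))
      = InnerProductSpace.toDual ℝ E ((σ * ‖x‖^(p-2)) • x) := by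
    apply ContinuousLinearMap.ext
    intro v
    simp only [ContinuousLinearMap.smul_apply, ContinuousLinearMap.coe_comp', Function.comp_apply,
      ContinuousLinearMap.prod_apply, ContinuousLinearMap.coe_id', id_eq, fderivInnerCLM_apply,
      InnerProductSpace.toDual_apply_apply, smul_eq_mul]
    rw [real_inner_smul_left, hcoef, real_inner_comm v x]
    field_simp
    ring
  rw [← heq]
  exact hrp

lemma convex_support {f : E → ℝ} (hf : ConvexOn ℝ Set.univ f) {g x : E}
    (hg : HasGradientAt f g x) (y : E) :
    f x + ⟪g, y - x⟫ ≤ f y := by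
  set A : ℝ →ᵃ[ℝ] E := AffineMap.lineMap x y with hA
  have hq_conv : ConvexOn ℝ Set.univ (f ∘ A) := by
    have := hf.comp_affineMap A
    simpa using this
  have hγ : HasDerivAt (fun t : ℝ => A t) (y - x) 0 := by
    simp only [hA, AffineMap.lineMap_apply, vsub_eq_sub, vadd_eq_add]
    simpa using ((hasDerivAt_id (0:ℝ)).smul_const (y - x)).add_const x
  have hA0 : A 0 = x := by simp [hA]
  have hd : HasDerivAt (f ∘ A) ⟪g, y - x⟫ 0 := by
    have hfd : HasFDerivAt f (InnerProductSpace.toDual ℝ E g) (A 0) := by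
      rw [hA0]; exact hg.hasFDerivAt
    have := hfd.comp_hasDerivAt 0 hγ
    simpa [InnerProductSpace.toDual_apply_apply] using this
  have hslope := hq_conv.le_slope_of_hasDerivAt (mem_univ 0) (mem_univ 1) one_pos hd
  rw [slope_def_field] at hslope
  have h0 : (f ∘ A) 0 = f x := by simp [hA]
  have h1 : (f ∘ A) 1 = f y := by simp [hA]
  rw [h0, h1] at hslope
  simp only [sub_zero, div_one] at hslope
  linarith

end AuxLemmas

/-- Growth of a uniformly-convex-regularized objective around its minimizer:
`(1/2)^(p-2) (σ/p) ‖x - x*‖^p ≤ F(x) - F(x*)`. -/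
theorem regularized_objective_growth
    {n : ℕ} (f : EuclideanSpace ℝ (Fin n) → ℝ)
    (hf_conv : ConvexOn ℝ Set.univ f)
    (f' : EuclideanSpace ℝ (Fin n) → EuclideanSpace ℝ (Fin n))
    (hf_diff : ∀ x, HasGradientAt f (f' x) x)
    (σ p : ℝ) (hσ : 0 < σ) (hp : 2 ≤ p)
    (F : EuclideanSpace ℝ (Fin n) → ℝ)
    (hF : ∀ x, F x = f x + σ / p * ‖x‖ ^ p)
    (xstar : EuclideanSpace ℝ (Fin n))
    (hxstar : IsMinOn F Set.univ xstar) :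
    (∀ x, (1 / 2 : ℝ) ^ (p - 2) * (σ / p) * ‖x - xstar‖ ^ p ≤ F x - F xstar) ∧
    (1 / 2 : ℝ) ^ (p - 2) * (σ / p) * ‖xstar‖ ^ p ≤ F 0 - F xstar := by
  have hp0 : (0:ℝ) < p := by linarith
  have hFfun : F = fun x => f x + σ/p * ‖x‖^p := funext hF
  -- gradient of F at xstar
  have hgF : HasGradientAt F (f' xstar + (σ * ‖xstar‖^(p-2)) • xstar) xstar := by
    rw [hFfun, hasGradientAt_iff_hasFDerivAt, map_add]
    exact ((hf_diff xstar).hasFDerivAt).add ((grad_reg hp σ xstar).hasFDerivAt)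
  -- first-order condition
  have hloc : IsLocalMin F xstar := hxstar.isLocalMin Filter.univ_mem
  have hzero : f' xstar + (σ * ‖xstar‖^(p-2)) • xstar = 0 := by
    have h0 := hloc.hasFDerivAt_eq_zero (hgF.hasFDerivAt)
    have := congrArg (InnerProductSpace.toDual ℝ (EuclideanSpace ℝ (Fin n))).symm h0
    simpa using this
  have hf'eq : f' xstar = -((σ * ‖xstar‖^(p-2)) • xstar) := by
    exact eq_neg_of_add_eq_zero_left hzero
  -- constant rewriting
  have hconst : ((1:ℝ)/2) ^ (p-2) = (2:ℝ)^(2-p) := by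
    rw [one_div, ← Real.rpow_neg_one (2:ℝ), ← Real.rpow_mul (by norm_num : (0:ℝ) ≤ 2)]
    congr 1; ring
  have main : ∀ x, (1 / 2 : ℝ) ^ (p - 2) * (σ / p) * ‖x - xstar‖ ^ p ≤ F x - F xstar := by
    intro x
    have hsupp := convex_support hf_conv (hf_diff xstar) x
    have hvec := vector_key hp x xstar
    rw [hf'eq] at hsupp
    rw [inner_neg_left, real_inner_smul_left] at hsupp
    -- hsupp : f xstar + -(σ * ‖xstar‖^(p-2) * ⟪xstar, x - xstar⟫) ≤ f x
    have hFx := hF x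
    have hFxs := hF xstar
    set I : ℝ := ⟪xstar, x - xstar⟫
    set N : ℝ := ‖xstar‖^(p-2)
    have hmul := mul_le_mul_of_nonneg_left hvec (le_of_lt (div_pos hσ hp0))
    -- σ/p * (...) ≤ σ/p * ‖x‖^p
    rw [hconst]
    have hexp : σ/p * (p * N * I) = σ * N * I := by field_simp
    nlinarith [hmul, hsupp, hexp]
  refine ⟨main, ?_⟩
  have := main 0
  rwa [zero_sub, norm_neg] at this
end

section
/- The function x ↦ (1/p)‖x‖^p on ℝⁿ with the Euclidean norm and p ≥ 2 is uniformly convex of degree p: for all x, y and λ ∈ [0,1], (1/p)‖λx + (1−λ)y‖^p ≤ λ(1/p)‖x‖^p + (1−λ)(1/p)‖y‖^p − (1/2)^{p−2} λ(1−λ)[λ^{p−1} + (1−λ)^{p−1}] (1/p)‖x − y‖^p. -/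
open Real


-- superadditivity of rpow
lemma myrpow_superadd {x y p : ℝ} (hx : 0 ≤ x) (hy : 0 ≤ y) (hp : 1 ≤ p) :
    x ^ p + y ^ p ≤ (x + y) ^ p := by
  have hxy : 0 ≤ x + y := by linarith
  have h1 : x ^ p ≤ x * (x + y) ^ (p - 1) := by
    calc x ^ p = x * x ^ (p - 1) := by
          rw [← Real.rpow_one_add' hx (by linarith)]; ring_nf
      _ ≤ x * (x + y) ^ (p - 1) := by
          apply mul_le_mul_of_nonneg_left _ hx
          exact Real.rpow_le_rpow hx (by linarith) (by linarith)
  have h2 : y ^ p ≤ y * (x + y) ^ (p - 1) := by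
    calc y ^ p = y * y ^ (p - 1) := by
          rw [← Real.rpow_one_add' hy (by linarith)]; ring_nf
      _ ≤ y * (x + y) ^ (p - 1) := by
          apply mul_le_mul_of_nonneg_left _ hy
          exact Real.rpow_le_rpow hy (by linarith) (by linarith)
  calc x ^ p + y ^ p ≤ (x + y) * (x + y) ^ (p - 1) := by linarith [h1, h2]; 
    _ = (x + y) ^ p := by rw [← Real.rpow_one_add' hxy (by linarith)]; ring_nf

lemma mypowmean {x y p : ℝ} (hx : 0 ≤ x) (hy : 0 ≤ y) (hp : 2 ≤ p) :
    (2:ℝ) ^ (2 - p) * (x + y) ^ (p - 1) ≤ x ^ (p - 1) + y ^ (p - 1) := by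
  have hq : 1 ≤ p - 1 := by linarith
  have h2 : (0:ℝ) < 2 := by norm_num
  have hconv := (convexOn_rpow hq).2 (Set.mem_Ici.mpr hx) (Set.mem_Ici.mpr hy)
    (by norm_num : (0:ℝ) ≤ 1/2) (by norm_num : (0:ℝ) ≤ 1/2) (by norm_num)
  simp only [smul_eq_mul] at hconv
  have key : ((x + y)/2) ^ (p-1) = (x+y)^(p-1) / 2 ^ (p-1) :=
    Real.div_rpow (by linarith) (by norm_num) _
  have h1 : (1/2*x + 1/2*y : ℝ) = (x+y)/2 := by ring
  rw [h1, key] at hconv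
  have hpos : (0:ℝ) < 2 ^ (p-1) := Real.rpow_pos_of_pos h2 _
  have hid : (2:ℝ) ^ (2 - p) * 2 ^ (p - 1) = 2 := by
    rw [← Real.rpow_add h2, ← Real.rpow_one 2]; norm_num
  have h3 : (x+y)^(p-1) * 2 ≤ (x^(p-1)+y^(p-1)) * 2^(p-1) := by
    rw [div_le_iff₀ hpos] at hconv
    nlinarith [hconv, hpos]
  have h4 := mul_le_mul_of_nonneg_left h3 (Real.rpow_pos_of_pos h2 (2-p)).le
  calc (2:ℝ)^(2-p) * (x+y)^(p-1) = (2^(2-p) * ((x+y)^(p-1) * 2))/2 := by ring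
    _ ≤ (2^(2-p) * ((x^(p-1)+y^(p-1)) * 2^(p-1)))/2 := by linarith
    _ = (x^(p-1)+y^(p-1)) * (2^(2-p)*2^(p-1))/2 := by ring
    _ = x^(p-1)+y^(p-1) := by rw [hid]; ring

lemma myA_eq {p t : ℝ} (hp : 2 ≤ p) (ht : 0 ≤ t) :
    t * (t^2)^((p-2)/2) = t^(p-1) := by
  rw [show (t^2 : ℝ) = t ^ ((2:ℕ):ℝ) from (Real.rpow_natCast t 2).symm,
    ← Real.rpow_mul ht]
  push_cast
  rw [show (2*((p-2)/2) : ℝ) = p - 2 by ring,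
    ← Real.rpow_one_add' ht (by linarith : (1:ℝ) + (p-2) ≠ 0),
    show (1+(p-2) : ℝ) = p - 1 by ring]

lemma myphi_mono {p : ℝ} (hp : 2 ≤ p) {s t : ℝ} (hts : t ≤ s) :
    (2:ℝ)^(2-p) * (s - t)^(p-1) ≤ s * (s^2)^((p-2)/2) - t * (t^2)^((p-2)/2) := by
  have hq : 1 ≤ p - 1 := by linarith
  have hc1 : (2:ℝ)^(2-p) ≤ 1 :=
    Real.rpow_le_one_of_one_le_of_nonpos (by norm_num) (by linarith)
  have hst : 0 ≤ s - t := by linarith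
  have hstq : 0 ≤ (s-t)^(p-1) := Real.rpow_nonneg hst _
  have hnegA : ∀ u : ℝ, u ≤ 0 → u * (u^2)^((p-2)/2) = -((-u)^(p-1)) := by
    intro u hu
    have : (u^2 : ℝ) = (-u)^2 := by ring
    rw [this]
    have := myA_eq hp (by linarith : (0:ℝ) ≤ -u)
    nlinarith [this]
  rcases le_or_gt 0 t with ht | ht
  · rw [myA_eq hp ht, myA_eq hp (by linarith : (0:ℝ) ≤ s)]
    have := myrpow_superadd hst ht hq
    rw [show s - t + t = s by ring] at this
    nlinarith [hstq]
  rcases le_or_gt s 0 with hs | hs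
  · rw [hnegA s hs, hnegA t ht.le]
    have := myrpow_superadd hst (by linarith : (0:ℝ) ≤ -s) hq
    rw [show s - t + -s = -t by ring] at this
    nlinarith [hstq]
  · rw [myA_eq hp hs.le, hnegA t ht.le]
    have := mypowmean hs.le (by linarith : (0:ℝ) ≤ -t) hp
    rw [show s + -t = s - t by ring] at this
    linarith

lemma myApow {p t : ℝ} (ht : 0 ≤ t) : (t^2)^(p/2) = t^p := by
  rw [show (t^2 : ℝ) = t ^ ((2:ℕ):ℝ) from (Real.rpow_natCast t 2).symm,
    ← Real.rpow_mul ht]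
  push_cast
  rw [show (2*(p/2) : ℝ) = p by ring]

lemma my1d {p : ℝ} (hp : 2 ≤ p) {u v a : ℝ} (hvu : v ≤ u) (ha0 : 0 ≤ a) (ha1 : a ≤ 1) :
    ((a*u + (1-a)*v)^2)^(p/2)
      + (2:ℝ)^(2-p) * a * (1-a) * (a^(p-1) + (1-a)^(p-1)) * ((u-v)^2)^(p/2)
      ≤ a * ((u^2)^(p/2)) + (1-a) * ((v^2)^(p/2)) := by
  have hp0 : (0:ℝ) < p := by linarith
  have hq1 : (1:ℝ) ≤ p - 1 := by linarith
  set w := u - v with hwdef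
  have hw : 0 ≤ w := by rw [hwdef]; linarith
  set φ : ℝ → ℝ := fun t => t * (t^2)^((p-2)/2) with hφdef
  set ψ : ℝ → ℝ := fun τ => p * w * φ (v + τ*w) with hψdef
  set g : ℝ → ℝ := fun τ => ((v + τ*w)^2)^(p/2) with hgdef
  have hφcont : Continuous φ := by
    apply continuous_id.mul
    exact (continuous_pow 2).rpow_const (fun t => Or.inr (by linarith))
  have hψcont : Continuous ψ := by
    apply continuous_const.mul
    exact hφcont.comp (continuous_const.add (continuous_id.mul continuous_const))
  have hgderiv : ∀ τ : ℝ, HasDerivAt g (ψ τ) τ := by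
    intro τ
    have hlin : HasDerivAt (fun τ : ℝ => v + τ*w) w τ := by
      simpa using ((hasDerivAt_id τ).mul_const w).const_add v
    have hsq : HasDerivAt (fun τ : ℝ => (v + τ*w)^2) (2*(v+τ*w)^1*w) τ := by
      simpa using hlin.fun_pow 2
    have houter := Real.hasDerivAt_rpow_const (x := (v+τ*w)^2) (p := p/2)
      (Or.inr (by linarith))
    have hcomp := houter.comp τ hsq
    have : HasDerivAt g (p/2 * ((v+τ*w)^2)^(p/2-1) * (2*(v+τ*w)^1*w)) τ := by
      simpa [Function.comp_def, hgdef] using hcomp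
    convert this using 1
    rw [hψdef, hφdef]
    show p * w * ((v+τ*w) * ((v+τ*w)^2)^((p-2)/2))
        = p/2 * ((v+τ*w)^2)^(p/2-1) * (2*(v+τ*w)^1*w)
    rw [show (p/2 - 1 : ℝ) = (p-2)/2 by ring]
    ring
  have hFTC : ∀ c d : ℝ, (∫ τ in c..d, ψ τ) = g d - g c := fun c d =>
    intervalIntegral.integral_eq_sub_of_hasDerivAt (fun τ _ => hgderiv τ)
      (hψcont.intervalIntegrable c d)
  set B := p * (2:ℝ)^(2-p) * w^p with hBdef
  have h2p : (0:ℝ) ≤ (2:ℝ)^(2-p) := (Real.rpow_pos_of_pos two_pos _).le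
  have hB0 : 0 ≤ B := by
    apply mul_nonneg (mul_nonneg hp0.le h2p) (Real.rpow_nonneg hw p)
  -- key pointwise estimate
  have hkey : ∀ ρ τ : ℝ, 0 ≤ ρ → ρ ≤ a → a ≤ τ → τ ≤ 1 →
      B * ((τ-a)^(p-1) + (a-ρ)^(p-1)) ≤ ψ τ - ψ ρ := by
    intro ρ τ hρ0 hρa haτ hτ1
    have hτρ : ρ ≤ τ := le_trans hρa haτ
    have h1 : (v + ρ*w) ≤ (v + τ*w) := by nlinarith [hw]
    have hmono := myphi_mono hp h1
    rw [show (v + τ*w) - (v + ρ*w) = (τ - ρ)*w by ring,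
      Real.mul_rpow (by linarith : (0:ℝ) ≤ τ - ρ) hw] at hmono
    have hsup := myrpow_superadd (x := τ-a) (y := a-ρ)
      (by linarith) (by linarith) hq1
    rw [show (τ-a)+(a-ρ) = τ - ρ by ring] at hsup
    have hwp : w^p = w * w^(p-1) := by
      rw [← Real.rpow_one_add' hw (by linarith : (1:ℝ)+(p-1) ≠ 0),
        show (1+(p-1):ℝ) = p by ring]
    have hψτρ : ψ τ - ψ ρ = p * w * (φ (v+τ*w) - φ (v+ρ*w)) := by
      rw [hψdef]; ring
    have hpw : (0:ℝ) ≤ p * w := mul_nonneg hp0.le hw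
    calc B * ((τ-a)^(p-1) + (a-ρ)^(p-1))
        = p*w*((2:ℝ)^(2-p) * (((τ-a)^(p-1)+(a-ρ)^(p-1)) * w^(p-1))) := by
          rw [hBdef, hwp]; ring
      _ ≤ p*w*((2:ℝ)^(2-p) * ((τ-ρ)^(p-1) * w^(p-1))) := by
          apply mul_le_mul_of_nonneg_left _ hpw
          apply mul_le_mul_of_nonneg_left _ h2p
          exact mul_le_mul_of_nonneg_right hsup (Real.rpow_nonneg hw _)
      _ = p*w*((2:ℝ)^(2-p) * ((τ-ρ)^(p-1) * w^(p-1))) := rfl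
      _ ≤ p*w*(φ (v+τ*w) - φ (v+ρ*w)) := by
          apply mul_le_mul_of_nonneg_left _ hpw
          calc (2:ℝ)^(2-p) * ((τ-ρ)^(p-1) * w^(p-1))
              = (2:ℝ)^(2-p) * ((τ-ρ)^(p-1) * w^(p-1)) := rfl
            _ ≤ _ := hmono
      _ = ψ τ - ψ ρ := hψτρ.symm
  -- integral of (τ-a)^(p-1) over a..1
  have hcont1 : Continuous (fun τ : ℝ => (τ-a)^(p-1)) :=
    (continuous_id.sub continuous_const).rpow_const (fun x => Or.inr (by linarith))
  have hcont2 : Continuous (fun ρ : ℝ => (a-ρ)^(p-1)) :=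
    (continuous_const.sub continuous_id).rpow_const (fun x => Or.inr (by linarith))
  have hI1 : (∫ τ in a..1, (τ - a)^(p-1)) = (1-a)^p / p := by
    have hG : ∀ τ ∈ Set.uIcc a 1, HasDerivAt (fun τ : ℝ => (τ-a)^p/p) ((τ-a)^(p-1)) τ := by
      intro τ _
      have h1 : HasDerivAt (fun τ : ℝ => τ - a) 1 τ := (hasDerivAt_id τ).sub_const a
      have h2 := (Real.hasDerivAt_rpow_const (x := τ - a) (p := p)
        (Or.inr (by linarith))).comp τ h1
      have h3 := h2.div_const p
      have h4 : HasDerivAt (fun τ : ℝ => (τ-a)^p/p) (p * (τ-a)^(p-1) * 1 / p) τ := by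
        simpa [Function.comp] using h3
      convert h4 using 1
      field_simp
    rw [intervalIntegral.integral_eq_sub_of_hasDerivAt hG (hcont1.intervalIntegrable a 1)]
    rw [sub_self, Real.zero_rpow (by linarith : p ≠ 0)]
    ring
  have hI2 : (∫ ρ in (0:ℝ)..a, (a - ρ)^(p-1)) = a^p / p := by
    have hG : ∀ ρ ∈ Set.uIcc 0 a, HasDerivAt (fun ρ : ℝ => -((a-ρ)^p)/p) ((a-ρ)^(p-1)) ρ := by
      intro ρ _
      have h1 : HasDerivAt (fun ρ : ℝ => a - ρ) (-1) ρ := (hasDerivAt_id ρ).const_sub a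
      have h2 := (Real.hasDerivAt_rpow_const (x := a - ρ) (p := p)
        (Or.inr (by linarith))).comp ρ h1
      have h3 := (h2.div_const p).fun_neg
      have h4 : HasDerivAt (fun ρ : ℝ => -((a-ρ)^p/p)) (-(p * (a-ρ)^(p-1) * (-1) / p)) ρ := by
        simpa [Function.comp] using h3
      have h5 : HasDerivAt (fun ρ : ℝ => -((a-ρ)^p)/p) (-(p * (a-ρ)^(p-1) * (-1) / p)) ρ := by
        convert h4 using 2; ring
      convert h5 using 1
      field_simp
    rw [intervalIntegral.integral_eq_sub_of_hasDerivAt hG (hcont2.intervalIntegrable 0 a)]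
    rw [sub_self, Real.zero_rpow (by linarith : p ≠ 0)]
    ring_nf
  -- inner estimate
  have hinner : ∀ ρ ∈ Set.Icc (0:ℝ) a,
      B * ((1-a)^p/p + (1-a)*(a-ρ)^(p-1)) ≤ (∫ τ in a..1, ψ τ) - (1-a) * ψ ρ := by
    intro ρ hρ
    obtain ⟨hρ0, hρa⟩ := hρ
    have hsub : (∫ τ in a..1, (ψ τ - ψ ρ)) = (∫ τ in a..1, ψ τ) - (1-a) * ψ ρ := by
      rw [intervalIntegral.integral_sub (hψcont.intervalIntegrable a 1)
        (intervalIntegrable_const), intervalIntegral.integral_const, smul_eq_mul]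
    have hmono2 := intervalIntegral.integral_mono_on (μ := MeasureTheory.volume) (f := fun τ => B * ((τ-a)^(p-1) + (a-ρ)^(p-1))) (g := fun τ => ψ τ - ψ ρ) ha1
      (((continuous_const.mul (hcont1.add continuous_const))).intervalIntegrable a 1)
      ((hψcont.sub continuous_const).intervalIntegrable a 1)
      (fun τ hτ => hkey ρ τ hρ0 hρa hτ.1 hτ.2)
    have hLHS : (∫ τ in a..1, B * ((τ-a)^(p-1) + (a-ρ)^(p-1)))
        = B * ((1-a)^p/p + (1-a)*(a-ρ)^(p-1)) := by
      rw [intervalIntegral.integral_const_mul,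
        intervalIntegral.integral_add (hcont1.intervalIntegrable a 1)
          (intervalIntegrable_const), hI1, intervalIntegral.integral_const, smul_eq_mul]
    rw [hLHS, hsub] at hmono2
    exact hmono2
  -- outer estimate
  have houter2 := intervalIntegral.integral_mono_on (μ := MeasureTheory.volume) (f := fun ρ => B * ((1-a)^p/p + (1-a)*(a-ρ)^(p-1))) (g := fun ρ => (∫ τ in a..1, ψ τ) - (1-a) * ψ ρ) ha0
    ((continuous_const.mul ((continuous_const.add (continuous_const.mul hcont2)))).intervalIntegrable 0 a)
    ((continuous_const.sub (continuous_const.mul hψcont)).intervalIntegrable 0 a)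
    hinner
  have hLHS2 : (∫ ρ in (0:ℝ)..a, B * ((1-a)^p/p + (1-a)*(a-ρ)^(p-1)))
      = B * (a*(1-a)^p/p + (1-a)*(a^p/p)) := by
    rw [intervalIntegral.integral_const_mul,
      intervalIntegral.integral_add (f := fun _ => (1-a)^p/p) (g := fun ρ => (1-a)*(a-ρ)^(p-1)) intervalIntegrable_const
        ((continuous_const.mul hcont2).intervalIntegrable 0 a),
      intervalIntegral.integral_const, intervalIntegral.integral_const_mul, hI2, smul_eq_mul]
    ring
  have hpull : (∫ ρ in (0:ℝ)..a, (1-a) * ψ ρ) = (1-a) * ∫ ρ in (0:ℝ)..a, ψ ρ :=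
    intervalIntegral.integral_const_mul _ _
  have hRHS2 : (∫ ρ in (0:ℝ)..a, ((∫ τ in a..1, ψ τ) - (1-a) * ψ ρ))
      = a * (∫ τ in a..1, ψ τ) - (1-a) * (∫ ρ in (0:ℝ)..a, ψ ρ) := by
    rw [intervalIntegral.integral_sub (f := fun _ => ∫ τ in a..1, ψ τ) (g := fun ρ => (1-a) * ψ ρ) intervalIntegrable_const
      ((continuous_const.mul hψcont).intervalIntegrable 0 a),
      intervalIntegral.integral_const, smul_eq_mul, hpull]
    ring
  rw [hLHS2, hRHS2, hFTC a 1, hFTC 0 a] at houter2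
  -- houter2 : B * (a*(1-a)^p/p + (1-a)*(a^p/p)) ≤ a*(g 1 - g a) - (1-a)*(g a - g 0)
  -- rewrite goal in terms of g
  have hga : ((a*u + (1-a)*v)^2)^(p/2) = g a := by
    simp only [hgdef]
    rw [show v + a*w = a*u + (1-a)*v by rw [hwdef]; ring]
  have hg1 : (u^2)^(p/2) = g 1 := by
    simp only [hgdef]
    rw [show v + 1*w = u by rw [hwdef]; ring]
  have hg0 : (v^2)^(p/2) = g 0 := by
    simp only [hgdef]
    rw [show v + 0*w = v by ring]
  have hwpow : ((u-v)^2)^(p/2) = w^p := by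
    rw [← hwdef]; exact myApow hw
  rw [hga, hg1, hg0, hwpow]
  -- algebra for the penalty term
  have hap : a^p = a * a^(p-1) := by
    rw [← Real.rpow_one_add' ha0 (by linarith : (1:ℝ)+(p-1) ≠ 0),
      show (1+(p-1):ℝ) = p by ring]
  have h1ap : (1-a)^p = (1-a) * (1-a)^(p-1) := by
    rw [← Real.rpow_one_add' (by linarith : (0:ℝ) ≤ 1-a) (by linarith : (1:ℝ)+(p-1) ≠ 0),
      show (1+(p-1):ℝ) = p by ring]
  have hpen : B * (a*(1-a)^p/p + (1-a)*(a^p/p))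
      = (2:ℝ)^(2-p) * a * (1-a) * (a^(p-1) + (1-a)^(p-1)) * w^p := by
    rw [hBdef, hap, h1ap]
    field_simp
    ring
  rw [hpen] at houter2
  linarith

lemma my1d' {p : ℝ} (hp : 2 ≤ p) (u v a : ℝ) (ha0 : 0 ≤ a) (ha1 : a ≤ 1) :
    ((a*u + (1-a)*v)^2)^(p/2)
      + (2:ℝ)^(2-p) * a * (1-a) * (a^(p-1) + (1-a)^(p-1)) * ((u-v)^2)^(p/2)
      ≤ a * ((u^2)^(p/2)) + (1-a) * ((v^2)^(p/2)) := by
  rcases le_total v u with h | h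
  · exact my1d hp h ha0 ha1
  · have this1 := my1d hp h (a := 1-a) (by linarith) (by linarith)
    rw [show (1-(1-a) : ℝ) = a by ring] at this1
    rw [show (((1-a)*v + a*u)^2 : ℝ) = (a*u+(1-a)*v)^2 by ring,
      show ((v-u)^2 : ℝ) = (u-v)^2 by ring] at this1
    linarith

set_option maxHeartbeats 1000000 in
/-- Uniform convexity of degree `p ≥ 2` of `x ↦ (1/p)‖x‖^p` for the Euclidean norm. -/
theorem power_of_norm_uniformly_convex
    {n : ℕ} (p : ℝ) (hp : 2 ≤ p) :
    ∀ (x y : EuclideanSpace ℝ (Fin n)) (a : ℝ), 0 ≤ a → a ≤ 1 →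
      1 / p * ‖a • x + (1 - a) • y‖ ^ p ≤
        a * (1 / p * ‖x‖ ^ p) + (1 - a) * (1 / p * ‖y‖ ^ p)
          - (1 / 2 : ℝ) ^ (p - 2) * a * (1 - a) * (a ^ (p - 1) + (1 - a) ^ (p - 1))
            * (1 / p * ‖x - y‖ ^ p) := by
  intro x y a ha0 ha1
  have hp0 : (0:ℝ) < p := by linarith
  set r := ‖x‖ with hrdef
  set s := ‖y‖ with hsdef
  set t := ‖a • x + (1 - a) • y‖ with htdef
  set d := ‖x - y‖ with hddef
  have hr : 0 ≤ r := norm_nonneg _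
  have hs : 0 ≤ s := norm_nonneg _
  have ht : 0 ≤ t := norm_nonneg _
  have hd : 0 ≤ d := norm_nonneg _
  have ha1' : (0:ℝ) ≤ 1 - a := by linarith
  -- Euclidean identity
  have hnorm : t^2 = a*r^2 + (1-a)*s^2 - a*(1-a)*d^2 := by
    have h_add := norm_add_sq_real (a • x) ((1-a) • y)
    have h_sub := norm_sub_sq_real x y
    have hax : ‖a • x‖ = a*r := by
      rw [norm_smul, Real.norm_eq_abs, abs_of_nonneg ha0]
    have hay : ‖(1-a) • y‖ = (1-a)*s := by
      rw [norm_smul, Real.norm_eq_abs, abs_of_nonneg ha1']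
    have hinner : (inner ℝ (a • x) ((1-a) • y) : ℝ) = a*(1-a)*(inner ℝ x y : ℝ) := by
      rw [real_inner_smul_left, real_inner_smul_right]; ring
    rw [hax, hay, hinner] at h_add
    rw [← htdef] at h_add
    rw [← hrdef, ← hsdef, ← hddef] at h_sub
    linear_combination h_add + (a*(1-a)) * h_sub
  have hd1 : |r - s| ≤ d := abs_norm_sub_norm_le x y
  have hd2 : d ≤ r + s := norm_sub_le x y
  have he1 : (r-s)^2 ≤ d^2 := by nlinarith [hd1, abs_nonneg (r-s), sq_abs (r-s)]
  have he2 : d^2 ≤ (r+s)^2 := by nlinarith [hd2, hd]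
  have hle : (r-s)^2 ≤ (r+s)^2 := by nlinarith [mul_nonneg hr hs]
  set K := (2:ℝ)^(2-p)*a*(1-a)*(a^(p-1)+(1-a)^(p-1)) with hKdef
  have hK0 : 0 ≤ K := by
    apply mul_nonneg
    apply mul_nonneg (mul_nonneg (Real.rpow_pos_of_pos two_pos _).le ha0) ha1'
    exact add_nonneg (Real.rpow_nonneg ha0 _) (Real.rpow_nonneg ha1' _)
  set c0 := a*r^2 + (1-a)*s^2 with hc0def
  set c1 := a*(1-a) with hc1def
  have hc1 : 0 ≤ c1 := mul_nonneg ha0 ha1'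
  set F : ℝ → ℝ := fun e => (c0 - c1*e)^(p/2) + K * e^(p/2) with hFdef
  have harg : ∀ e ∈ Set.Icc ((r-s)^2) ((r+s)^2), 0 ≤ c0 - c1*e := by
    intro e he
    have h2 := he.2
    have := mul_le_mul_of_nonneg_left h2 hc1
    nlinarith [sq_nonneg (a*r - (1-a)*s)]
  have hrp : ConvexOn ℝ (Set.Ici (0:ℝ)) (fun x : ℝ => x^(p/2)) :=
    convexOn_rpow (by linarith)
  have hF : ConvexOn ℝ (Set.Icc ((r-s)^2) ((r+s)^2)) F := by
    constructor
    · exact convex_Icc _ _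
    · intro e1 he1' e2 he2' θ1 θ2 hθ1 hθ2 hθ
      simp only [hFdef, smul_eq_mul]
      have hm1 : (0:ℝ) ≤ c0 - c1*e1 := harg e1 he1'
      have hm2 : (0:ℝ) ≤ c0 - c1*e2 := harg e2 he2'
      have ht1 := hrp.2 (Set.mem_Ici.mpr hm1) (Set.mem_Ici.mpr hm2) hθ1 hθ2 hθ
      have he10 : (0:ℝ) ≤ e1 := le_trans (sq_nonneg _) he1'.1
      have he20 : (0:ℝ) ≤ e2 := le_trans (sq_nonneg _) he2'.1
      have ht2 := hrp.2 (Set.mem_Ici.mpr he10) (Set.mem_Ici.mpr he20) hθ1 hθ2 hθ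
      simp only [smul_eq_mul] at ht1 ht2
      have heq : c0 - c1*(θ1*e1 + θ2*e2) = θ1*(c0-c1*e1) + θ2*(c0-c1*e2) := by
        have h12 : θ1 + θ2 = 1 := hθ
        linear_combination (-c0) * h12
      rw [heq]
      have ht2' := mul_le_mul_of_nonneg_left ht2 hK0
      linarith
  have hmem1 : (r-s)^2 ∈ Set.Icc ((r-s)^2) ((r+s)^2) := ⟨le_refl _, hle⟩
  have hmem2 : (r+s)^2 ∈ Set.Icc ((r-s)^2) ((r+s)^2) := ⟨hle, le_refl _⟩
  have hmemd : d^2 ∈ segment ℝ ((r-s)^2) ((r+s)^2) := by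
    rw [segment_eq_Icc hle]; exact ⟨he1, he2⟩
  have hmax := hF.le_on_segment hmem1 hmem2 hmemd
  -- endpoint values
  have hend1 : F ((r-s)^2) ≤ a*r^p + (1-a)*s^p := by
    have h1d := my1d' hp r s a ha0 ha1
    simp only [hFdef]
    rw [show c0 - c1*(r-s)^2 = (a*r+(1-a)*s)^2 by rw [hc0def, hc1def]; ring]
    rw [myApow hr, myApow hs] at h1d
    rw [hKdef]
    linarith
  have hend2 : F ((r+s)^2) ≤ a*r^p + (1-a)*s^p := by
    have h1d := my1d' hp r (-s) a ha0 ha1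
    simp only [hFdef]
    rw [show c0 - c1*(r+s)^2 = (a*r-(1-a)*s)^2 by rw [hc0def, hc1def]; ring]
    rw [show ((a*r + (1-a)*(-s))^2 : ℝ) = (a*r-(1-a)*s)^2 by ring,
      show ((r-(-s))^2 : ℝ) = (r+s)^2 by ring,
      show (((-s))^2 : ℝ) = s^2 by ring] at h1d
    rw [myApow hr, myApow hs] at h1d
    rw [hKdef]
    linarith
  have hFd : F (d^2) = t^p + K*d^p := by
    simp only [hFdef]
    rw [show c0 - c1*d^2 = t^2 by rw [hc0def, hc1def, hnorm]]
    rw [myApow ht, myApow hd]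
  have hP : t^p + K*d^p ≤ a*r^p + (1-a)*s^p := by
    rw [← hFd]
    exact le_trans hmax (max_le hend1 hend2)
  -- conclude
  have hhalf : ((1/2 : ℝ))^(p-2) = (2:ℝ)^(2-p) := by
    rw [one_div, Real.inv_rpow (by norm_num : (0:ℝ) ≤ 2),
      ← Real.rpow_neg (by norm_num : (0:ℝ) ≤ 2),
      show (-(p-2):ℝ) = 2-p by ring]
  rw [hhalf]
  have hdiv := mul_le_mul_of_nonneg_left hP (by positivity : (0:ℝ) ≤ 1/p)
  have hKd : (2:ℝ)^(2-p)*a*(1-a)*(a^(p-1)+(1-a)^(p-1))*(1/p*d^p) = 1/p*(K*d^p) := by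
    rw [hKdef]; ring
  nlinarith [hdiv, hKd]
end

section
/- For p > 1, σ > 0, β > 0, q ≥ 1 and the standard basis vectors e₁,…,e_T of ℝⁿ with signs ξ_k ∈ {−1,1}, min_{x ∈ ℝⁿ} ( β max_{1≤k≤T} ξ_k⟨e_k, x⟩ + (σ/p)‖x‖_q^p ) = −((p−1)/p) ( β^p / (σ T^{p/q}) )^{1/(p−1)}. -/
open Real

lemma scalar_lb (p A β u : ℝ) (hp : 1 < p) (hA : 0 < A) (hβ : 0 < β) (hu : 0 ≤ u) :
    -((p - 1) / p * (β ^ p / A) ^ (1 / (p - 1))) ≤ -(β * u) + A / p * u ^ p := by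
  have hp0 : (0:ℝ) < p := by linarith
  have hp1 : (0:ℝ) < p - 1 := by linarith
  have hA1 : (0:ℝ) < A ^ (1/p) := rpow_pos_of_pos hA _
  have hy := Real.young_inequality (A ^ (1/p) * u) (β / A ^ (1/p))
      (Real.HolderConjugate.conjExponent hp)
  have h1 : |A ^ (1/p) * u| ^ p = A * u ^ p := by
    rw [abs_of_nonneg (by positivity), mul_rpow hA1.le hu, ← rpow_mul hA.le,
      one_div_mul_cancel hp0.ne', rpow_one]
  have hce : p.conjExponent = p / (p - 1) := rfl
  have h2 : |β / A ^ (1/p)| ^ p.conjExponent = (β ^ p / A) ^ (1 / (p - 1)) := by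
    rw [abs_of_nonneg (by positivity), hce, div_rpow hβ.le hA1.le, ← rpow_mul hA.le,
      div_rpow (by positivity) hA.le, ← rpow_mul hβ.le]
    congr 1
    · congr 1; field_simp
    · field_simp
  have h3 : A ^ (1/p) * u * (β / A ^ (1/p)) = β * u := by
    field_simp
  rw [h1, h2, h3, hce] at hy
  have h4 : (β ^ p / A) ^ (1 / (p - 1)) / (p / (p - 1))
      = (p - 1) / p * (β ^ p / A) ^ (1 / (p - 1)) := by
    field_simp
  rw [h4] at hy
  have h5 : A / p * u ^ p = A * u ^ p / p := by ring
  linarith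

lemma scalar_eq (p A β : ℝ) (hp : 1 < p) (hA : 0 < A) (hβ : 0 < β) :
    -(β * (β / A) ^ (1 / (p - 1))) + A / p * ((β / A) ^ (1 / (p - 1))) ^ p
      = -((p - 1) / p * (β ^ p / A) ^ (1 / (p - 1))) := by
  have hp0 : (0:ℝ) < p := by linarith
  have hp1 : (0:ℝ) < p - 1 := by linarith
  set t : ℝ := (β / A) ^ (1 / (p - 1)) with htdef
  have ht0 : 0 < t := rpow_pos_of_pos (by positivity) _
  have htp1 : t ^ (p - 1) = β / A := by
    rw [htdef, ← rpow_mul (by positivity), one_div_mul_cancel hp1.ne', rpow_one]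
  have htp : t ^ p = (β / A) * t := by
    have : t ^ p = t ^ ((p - 1) + 1) := by norm_num
    rw [this, rpow_add ht0, htp1, rpow_one]
  have hbt : β * t = (β ^ p / A) ^ (1 / (p - 1)) := by
    have hb : β = (β ^ (p - 1)) ^ (1 / (p - 1)) := by
      rw [← rpow_mul hβ.le, mul_one_div, div_self hp1.ne', rpow_one]
    calc β * t = (β ^ (p - 1)) ^ (1 / (p - 1)) * (β / A) ^ (1 / (p - 1)) := by rw [← hb]
    _ = (β ^ (p - 1) * (β / A)) ^ (1 / (p - 1)) := by
        rw [← mul_rpow (by positivity) (by positivity)]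
    _ = (β ^ p / A) ^ (1 / (p - 1)) := by
        congr 1
        rw [mul_div_assoc', ← rpow_add_one hβ.ne']
        norm_num
  rw [htp]
  have : A / p * (β / A * t) = β * t / p := by field_simp
  rw [this, ← hbt]; field_simp; ring


/-- The minimum of `β max_k ξ_k⟨e_k,x⟩ + (σ/p)‖x‖_q^p` with the `ℓ_q`-norm
regularizer and standard basis vectors `e_k`. -/
theorem min_max_linear_plus_lq_power_regularizer
    {n T : ℕ} (hT : 0 < T) (hTn : T ≤ n)
    (p σ β q : ℝ) (hp : 1 < p) (hσ : 0 < σ) (hβ : 0 < β) (hq : 1 ≤ q) :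
    ∀ (ξ : Fin T → ℝ), (∀ k, ξ k = 1 ∨ ξ k = -1) →
    haveI : Nonempty (Fin T) := Fin.pos_iff_nonempty.mp hT
    IsLeast (Set.range fun x : Fin n → ℝ =>
        β * (⨆ k : Fin T, ξ k * x (Fin.castLE hTn k))
          + σ / p * ((∑ i, |x i| ^ q) ^ (1 / q)) ^ p)
      (-((p - 1) / p * (β ^ p / (σ * (T : ℝ) ^ (p / q))) ^ (1 / (p - 1)))) := by
  intro ξ hξ
  haveI : Nonempty (Fin T) := Fin.pos_iff_nonempty.mp hT
  have hq0 : (0:ℝ) < q := lt_of_lt_of_le one_pos hq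
  have hp0 : (0:ℝ) < p := by linarith
  have hT0 : (0:ℝ) < (T:ℝ) := by exact_mod_cast hT
  set A : ℝ := σ * (T:ℝ) ^ (p/q) with hA
  have hA0 : 0 < A := by positivity
  have hξsq : ∀ k, ξ k * ξ k = 1 := by
    intro k; rcases hξ k with h | h <;> rw [h] <;> norm_num
  -- the embedding
  set emb := Fin.castLEEmb hTn with hemb
  have hmem : ∀ i : Fin n, i ∈ Finset.univ.map emb ↔ (i:ℕ) < T := by
    intro i
    simp only [Finset.mem_map, Finset.mem_univ, true_and, hemb]
    constructor
    · rintro ⟨k, rfl⟩; simpa using k.isLt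
    · intro h; exact ⟨⟨i, h⟩, rfl⟩
  constructor
  · -- membership
    set t : ℝ := (β / A) ^ (1 / (p - 1)) with ht
    have ht0 : 0 < t := rpow_pos_of_pos (by positivity) _
    refine ⟨fun i => if h : (i:ℕ) < T then -(ξ ⟨i, h⟩ * t) else 0, ?_⟩
    set x : Fin n → ℝ := fun i => if h : (i:ℕ) < T then -(ξ ⟨i, h⟩ * t) else 0 with hx
    have hxk : ∀ k : Fin T, x (Fin.castLE hTn k) = -(ξ k * t) := by
      intro k
      simp only [hx, Fin.coe_castLE, k.isLt, dif_pos, Fin.eta]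
    have hsup : (⨆ k : Fin T, ξ k * x (Fin.castLE hTn k)) = -t := by
      have : (fun k : Fin T => ξ k * x (Fin.castLE hTn k)) = fun _ => -t := by
        funext k
        rw [hxk k, mul_neg, ← mul_assoc, hξsq k, one_mul]
      rw [this, ciSup_const]
    have hsum : (∑ i, |x i| ^ q) = (T:ℝ) * t ^ q := by
      have h1 : (∑ i, |x i| ^ q) = ∑ i ∈ Finset.univ.map emb, |x i| ^ q := by
        refine (Finset.sum_subset (Finset.subset_univ _) ?_).symm
        intro i _ hi
        rw [hmem] at hi
        simp only [hx, dif_neg hi, abs_zero]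
        exact zero_rpow hq0.ne'
      rw [h1, Finset.sum_map]
      have h2 : ∀ k : Fin T, |x (emb k)| ^ q = t ^ q := by
        intro k
        have : emb k = Fin.castLE hTn k := rfl
        rw [this, hxk k, abs_neg, abs_mul]
        rcases hξ k with h | h <;>
          rw [h] <;> simp [abs_of_pos ht0]
      rw [Finset.sum_congr rfl fun k _ => h2 k]
      simp [mul_comm]
    show β * (⨆ k : Fin T, ξ k * x (Fin.castLE hTn k))
        + σ / p * ((∑ i, |x i| ^ q) ^ (1/q)) ^ p = _
    rw [hsup, hsum]
    have hnorm : (((T:ℝ) * t ^ q) ^ (1/q)) ^ p = (T:ℝ) ^ (p/q) * t ^ p := by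
      rw [mul_rpow hT0.le (rpow_nonneg ht0.le _), ← rpow_mul ht0.le,
        mul_one_div, div_self hq0.ne', rpow_one,
        mul_rpow (rpow_nonneg hT0.le _) ht0.le, ← rpow_mul hT0.le, one_div_mul_eq_div]
    rw [hnorm]
    have : β * -t + σ / p * ((T:ℝ) ^ (p/q) * t ^ p)
        = -(β * t) + A / p * t ^ p := by rw [hA]; ring
    rw [this]
    exact scalar_eq p A β hp hA0 hβ
  · -- lower bound
    rintro y ⟨x, rfl⟩
    simp only
    set S : ℝ := ⨆ k : Fin T, ξ k * x (Fin.castLE hTn k) with hS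
    have hbdd : BddAbove (Set.range fun k : Fin T => ξ k * x (Fin.castLE hTn k)) :=
      Set.Finite.bddAbove (Set.finite_range _)
    have hSk : ∀ k : Fin T, ξ k * x (Fin.castLE hTn k) ≤ S := fun k => le_ciSup hbdd k
    have hsum0 : (0:ℝ) ≤ ∑ i, |x i| ^ q :=
      Finset.sum_nonneg fun i _ => rpow_nonneg (abs_nonneg _) _
    have hN0 : (0:ℝ) ≤ ((∑ i, |x i| ^ q) ^ (1/q)) ^ p :=
      rpow_nonneg (rpow_nonneg hsum0 _) _
    rcases le_or_gt 0 S with hS0 | hS0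
    · have hm : (0:ℝ) ≤ (p - 1) / p * (β ^ p / A) ^ (1 / (p - 1)) :=
        mul_nonneg (div_nonneg (by linarith) hp0.le)
          (rpow_nonneg (div_nonneg (rpow_nonneg hβ.le _) hA0.le) _)
      have h1 : (0:ℝ) ≤ β * S := mul_nonneg hβ.le hS0
      have h2 : (0:ℝ) ≤ σ / p * ((∑ i, |x i| ^ q) ^ (1/q)) ^ p :=
        mul_nonneg (by positivity) hN0
      linarith
    · set u : ℝ := -S with hu
      have hu0 : 0 < u := by simp [hu]; linarith
      have habs : ∀ k : Fin T, u ≤ |x (Fin.castLE hTn k)| := by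
        intro k
        have hk := hSk k
        rcases hξ k with h | h
        · rw [h, one_mul] at hk
          calc u ≤ -(x (Fin.castLE hTn k)) := by simp [hu]; linarith
          _ ≤ |x (Fin.castLE hTn k)| := neg_le_abs _
        · rw [h, neg_one_mul] at hk
          calc u ≤ x (Fin.castLE hTn k) := by simp [hu] at hk ⊢; linarith
          _ ≤ |x (Fin.castLE hTn k)| := le_abs_self _
      have hsumge : (T:ℝ) * u ^ q ≤ ∑ i, |x i| ^ q := by
        have h1 : (T:ℝ) * u ^ q = ∑ _k : Fin T, u ^ q := by simp [mul_comm]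
        have h2 : ∑ _k : Fin T, u ^ q ≤ ∑ k : Fin T, |x (Fin.castLE hTn k)| ^ q :=
          Finset.sum_le_sum fun k _ => rpow_le_rpow hu0.le (habs k) hq0.le
        have h3 : ∑ k : Fin T, |x (Fin.castLE hTn k)| ^ q
            = ∑ i ∈ Finset.univ.map emb, |x i| ^ q := by
          rw [Finset.sum_map]; rfl
        have h4 : ∑ i ∈ Finset.univ.map emb, |x i| ^ q ≤ ∑ i, |x i| ^ q :=
          Finset.sum_le_sum_of_subset_of_nonneg (Finset.subset_univ _)
            (fun i _ _ => rpow_nonneg (abs_nonneg _) _)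
        linarith
      have hpow : (T:ℝ) ^ (p/q) * u ^ p ≤ ((∑ i, |x i| ^ q) ^ (1/q)) ^ p := by
        have h1 : (((T:ℝ) * u ^ q) ^ (1/q)) ^ p = (T:ℝ) ^ (p/q) * u ^ p := by
          rw [mul_rpow hT0.le (rpow_nonneg hu0.le _), ← rpow_mul hu0.le,
            mul_one_div, div_self hq0.ne', rpow_one,
            mul_rpow (rpow_nonneg hT0.le _) hu0.le, ← rpow_mul hT0.le, one_div_mul_eq_div]
        rw [← h1]
        exact rpow_le_rpow (rpow_nonneg (by positivity) _)
          (rpow_le_rpow (by positivity) hsumge (by positivity)) hp0.le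
      have hlb := scalar_lb p A β u hp hA0 hβ hu0.le
      have hstep : -(β * u) + A / p * u ^ p
          ≤ β * S + σ / p * ((∑ i, |x i| ^ q) ^ (1/q)) ^ p := by
        have hβS : β * S = -(β * u) := by rw [hu]; ring
        have h2 : σ / p * ((T:ℝ) ^ (p/q) * u ^ p)
            ≤ σ / p * ((∑ i, |x i| ^ q) ^ (1/q)) ^ p :=
          mul_le_mul_of_nonneg_left hpow (by positivity)
        have h3 : A / p * u ^ p = σ / p * ((T:ℝ) ^ (p/q) * u ^ p) := by rw [hA]; ring
        linarith
      linarith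
end
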